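/- Let X be a real Banach space of dimension greater than 1. Then ℵ₁ ≤ cov(X) ≤ 𝔠 (the cardinality of the continuum). Moreover, if the cofinality of dens(X) is uncountable, then cov(X) ≤ cf(dens(X)); in particular, if dens(X) = ℵ₁ then cov(X) = ℵ₁. -/

import Mathlib

/-!
Hyperplanes of a Banach space are closed and nowhere dense, so by the Baire category theorem no
countable family of them covers `X`; hence `ℵ₁ ≤ cov X`. If `f ≠ 0` and `g` is not a multiple of
`f`, every `x` lies in `ker f` or in `ker (g - t • f)` with `t = g x / f x`, so continuum many
hyperplanes cover `X`.

For the cofinality bound, enumerate a dense set in order type the initial ordinal of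
`κ = dens X`. The closed span of an initial segment is the closure of its rational span, so it
has density `< κ`; it is therefore a proper closed subspace, and lies in a hyperplane. When
`cf κ > ℵ₀`, each convergent sequence from the dense set is bounded in the enumeration, so the
closed spans along a cofinal set of size `cf κ` cover `X`.
-/

open Cardinal Set

universe u v

noncomputable section

/-- A hyperplane of a normed space: the kernel of a nonzero continuous linear functional. -/
def IsHyperplane {X : Type u} [NormedAddCommGroup X] [NormedSpace ℝ X] (H : Set X) : Prop :=
  ∃ f : X →L[ℝ] ℝ, f ≠ 0 ∧ H = {x | f x = 0}

/-- Member of the σ-ideal generated by hyperplanes: covered by countably many hyperplanes. -/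
def InHyperplaneIdeal {X : Type u} [NormedAddCommGroup X] [NormedSpace ℝ X] (Y : Set X) : Prop :=
  ∃ F : Set (Set X), F.Countable ∧ (∀ H ∈ F, IsHyperplane H) ∧ Y ⊆ ⋃₀ F

/-- Additivity of the hyperplane σ-ideal. -/
def addH (X : Type u) [NormedAddCommGroup X] [NormedSpace ℝ X] : Cardinal.{u} :=
  sInf {c | ∃ F : Set (Set X), (∀ A ∈ F, InHyperplaneIdeal A) ∧
    ¬ InHyperplaneIdeal (⋃₀ F) ∧ #F = c}

/-- Covering number of the hyperplane σ-ideal. -/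
def covH (X : Type u) [NormedAddCommGroup X] [NormedSpace ℝ X] : Cardinal.{u} :=
  sInf {c | ∃ F : Set (Set X), (∀ A ∈ F, InHyperplaneIdeal A) ∧ ⋃₀ F = Set.univ ∧ #F = c}

/-- Uniformity of the hyperplane σ-ideal. -/
def nonH (X : Type u) [NormedAddCommGroup X] [NormedSpace ℝ X] : Cardinal.{u} :=
  sInf {c | ∃ Y : Set X, ¬ InHyperplaneIdeal Y ∧ #Y = c}

/-- Cofinality of the hyperplane σ-ideal. -/
def cofH (X : Type u) [NormedAddCommGroup X] [NormedSpace ℝ X] : Cardinal.{u} :=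
  sInf {c | ∃ F : Set (Set X), (∀ A ∈ F, InHyperplaneIdeal A) ∧
    (∀ Y : Set X, InHyperplaneIdeal Y → ∃ A ∈ F, Y ⊆ A) ∧ #F = c}

/-- Density of a topological space: least cardinality of a dense subset. -/
def densH (X : Type u) [TopologicalSpace X] : Cardinal.{u} :=
  sInf {c | ∃ D : Set X, Dense D ∧ #D = c}

/-- `cf([κ]^ω)`: least cardinality of a cofinal family of countable subsets of κ. -/
def cfCtblSubsets (κ : Cardinal.{u}) : Cardinal.{u} :=
  sInf {c | ∃ F : Set (Set κ.out), (∀ S ∈ F, S.Countable) ∧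
    (∀ S : Set κ.out, S.Countable → ∃ T ∈ F, S ⊆ T) ∧ #F = c}

/-- A compact space has small diagonal. -/
def HasSmallDiagonal (K : Type u) [TopologicalSpace K] : Prop :=
  ∀ A : Set (K × K), #A = Cardinal.aleph 1 → A ∩ Set.diagonal K = ∅ →
    ∃ B ⊆ A, ¬ B.Countable ∧ closure B ∩ Set.diagonal K = ∅

/-- A topological space is scattered. -/
def IsScattered (K : Type u) [TopologicalSpace K] : Prop :=
  ∀ S : Set K, S.Nonempty → ∃ x ∈ S, ∃ U : Set K, IsOpen U ∧ U ∩ S = {x}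

theorem Set.bddAbove_of_mk_lt_cof {α : Type*} [LinearOrder α] {s : Set α}
    (hs : #s < Order.cof α) : BddAbove s := by
  by_contra h
  refine (Order.cof_le fun a => ?_).not_gt hs
  obtain ⟨b, hb, hab⟩ := not_bddAbove_iff.1 h a
  exact ⟨b, hb, hab.le⟩

theorem Cardinal.mk_Iic_ord_toType_lt {c : Cardinal} (hc : ℵ₀ ≤ c) (a : c.ord.ToType) :
    #(Iic a) < c := by
  have hIio : #(Iio a) < c := by simpa using mk_Iio_lt a (by simp)
  rw [← Iio_insert]
  exact mk_insert_le.trans_lt (add_lt_of_lt hc hIio (one_lt_aleph0.trans_le hc))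

theorem LinearMap.exists_ne_zero_mem_ker_of_one_lt_rank {K V : Type*} [Field K] [AddCommGroup V]
    [Module K V] (hdim : 1 < Module.rank K V) (f : V →ₗ[K] K) : ∃ w, w ≠ 0 ∧ f w = 0 := by
  by_contra! h
  have hinj : Function.Injective f :=
    (injective_iff_map_eq_zero f).2 fun w => not_imp_not.1 (h w)
  have hle := LinearMap.lift_rank_le_of_injective f hinj
  simp only [Module.rank_self, lift_one, lift_le_one_iff] at hle
  exact hle.not_gt hdim

section Topology

variable {X : Type*} [TopologicalSpace X]

theorem closure_iUnion_eq_iUnion_closure_of_aleph0_lt_cof [FrechetUrysohnSpace X]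
    {α : Type*} [LinearOrder α] {s : α → Set X} (hs : Monotone s) (hcof : ℵ₀ < Order.cof α) :
    closure (⋃ a, s a) = ⋃ a, closure (s a) := by
  refine (iUnion_subset fun a => closure_mono (subset_iUnion s a)).antisymm' fun x hx => ?_
  obtain ⟨u, hu, hlim⟩ := mem_closure_iff_seq_limit.1 hx
  choose a ha using fun n => mem_iUnion.1 (hu n)
  obtain ⟨b, hb⟩ : BddAbove (range a) :=
    Set.bddAbove_of_mk_lt_cof ((Set.countable_range a).le_aleph0.trans_lt hcof)
  exact mem_iUnion.2 ⟨b, mem_closure_of_tendsto hlim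
    (Filter.Eventually.of_forall fun n => hs (hb ⟨n, rfl⟩) (ha n))⟩

theorem densH_le_mk {D : Set X} (hD : Dense D) : densH X ≤ #D :=
  csInf_le' ⟨D, hD, rfl⟩

theorem exists_denseRange_ord_toType :
    ∃ d : (densH X).ord.ToType → X, DenseRange d := by
  obtain ⟨D, hD, hDcard⟩ := csInf_mem (s := {c | ∃ D : Set X, Dense D ∧ #D = c})
    ⟨_, Set.univ, dense_univ, rfl⟩
  obtain ⟨e⟩ : Nonempty ((densH X).ord.ToType ≃ D) := Cardinal.eq.1 (by
    rw [mk_toType, card_ord]; exact hDcard.symm)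
  exact ⟨fun a => e a, by simpa [DenseRange, ← Function.comp_def, e.surjective.range_comp]⟩

end Topology

section NormedSpace

variable {X : Type u} [NormedAddCommGroup X] [NormedSpace ℝ X]

theorem IsHyperplane.isClosed {H : Set X} (hH : IsHyperplane H) : IsClosed H := by
  obtain ⟨f, -, rfl⟩ := hH
  exact isClosed_eq f.continuous continuous_const

theorem IsHyperplane.isNowhereDense {H : Set X} (hH : IsHyperplane H) : IsNowhereDense H := by
  rw [hH.isClosed.isNowhereDense_iff, ← not_nonempty_iff_eq_empty]
  obtain ⟨f, hf, rfl⟩ := hH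
  intro hint
  have hker : LinearMap.ker (f : X →ₗ[ℝ] ℝ) = ⊤ := Submodule.eq_top_of_nonempty_interior' _ hint
  exact hf (ContinuousLinearMap.coe_injective (LinearMap.ker_eq_top.1 hker))

theorem IsHyperplane.inHyperplaneIdeal {H : Set X} (hH : IsHyperplane H) :
    InHyperplaneIdeal H :=
  ⟨{H}, countable_singleton H, by simpa using hH, subset_sUnion_of_mem rfl⟩

theorem InHyperplaneIdeal.isMeagre {Y : Set X} (hY : InHyperplaneIdeal Y) : IsMeagre Y := by
  obtain ⟨F, hF, hH, hYF⟩ := hY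
  exact isMeagre_iff_countable_union_isNowhereDense.2
    ⟨F, fun H hHF => (hH H hHF).isNowhereDense, hF, hYF⟩

theorem InHyperplaneIdeal.of_isClosed_ne_top (M : Submodule ℝ X) (hM : IsClosed (M : Set X))
    (hne : M ≠ ⊤) : InHyperplaneIdeal (M : Set X) := by
  obtain ⟨x, -, hx⟩ := SetLike.exists_of_lt hne.lt_top
  obtain ⟨φ, hφ⟩ := SeparatingDual.exists_ne_zero (R := ℝ)
    (mt (Submodule.Quotient.mk_eq_zero M).1 hx)
  refine ⟨{{y | (φ.comp M.mkQL) y = 0}}, countable_singleton _, ?_, fun y hy => ?_⟩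
  · rintro H rfl
    exact ⟨φ.comp M.mkQL, fun h => hφ (by simpa using congr($h x)), rfl⟩
  · simp [(Submodule.Quotient.mk_eq_zero M).2 hy]

theorem covH_le_mk {F : Set (Set X)} (hF : ∀ A ∈ F, InHyperplaneIdeal A) (hU : ⋃₀ F = Set.univ) :
    covH X ≤ #F :=
  csInf_le' ⟨F, hF, hU, rfl⟩

theorem aleph_one_le_mk_of_sUnion_eq_univ [CompleteSpace X] {F : Set (Set X)}
    (hF : ∀ A ∈ F, InHyperplaneIdeal A) (hU : ⋃₀ F = Set.univ) : ℵ₁ ≤ #F := by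
  by_contra! hlt
  have hFc : F.Countable := le_aleph0_iff_set_countable.1 (lt_aleph_one_iff.1 hlt)
  refine not_isMeagre_of_mem_residual (X := X) Filter.univ_mem ?_
  rw [← hU, sUnion_eq_biUnion]
  exact isMeagre_biUnion hFc fun A hA => (hF A hA).isMeagre

theorem exists_hyperplane_cover_mk_le_continuum (hdim : 1 < Module.rank ℝ X) :
    ∃ F : Set (Set X), (∀ H ∈ F, IsHyperplane H) ∧ ⋃₀ F = Set.univ ∧ #F ≤ 𝔠 := by
  have : Nontrivial X := rank_pos_iff_nontrivial.1 (zero_lt_one.trans hdim)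
  obtain ⟨v, hv⟩ := exists_ne (0 : X)
  obtain ⟨f, hf⟩ := SeparatingDual.exists_ne_zero (R := ℝ) hv
  obtain ⟨w, hw, hfw⟩ : ∃ w, w ≠ 0 ∧ f w = 0 :=
    LinearMap.exists_ne_zero_mem_ker_of_one_lt_rank hdim (f : X →ₗ[ℝ] ℝ)
  obtain ⟨g, hgw⟩ := SeparatingDual.exists_eq_one (R := ℝ) hw
  let H : Option ℝ → Set X := fun o => o.elim {x | f x = 0} fun t => {x | (g - t • f) x = 0}
  refine ⟨range H, ?_, eq_univ_of_forall fun x => ?_, ?_⟩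
  · rintro _ ⟨_ | t, rfl⟩
    · exact ⟨f, fun h => hf (by simp [h]), rfl⟩
    · exact ⟨g - t • f, fun h => by simpa [hgw, hfw] using congr($h w), rfl⟩
  · by_cases hx : f x = 0
    · exact ⟨_, ⟨none, rfl⟩, hx⟩
    · exact ⟨_, ⟨some (g x / f x), rfl⟩, by simp [H, div_mul_cancel₀ _ hx]⟩
  · simpa [mk_option, mk_real, add_one_of_aleph0_le aleph0_le_continuum]
      using mk_range_le_lift (f := H)

def ratSpan (s : Set X) : Set X :=
  range fun l : List (ℚ × s) => (l.map fun p => (p.1 : ℝ) • (p.2 : X)).sum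

theorem mk_ratSpan_le (s : Set X) : #(ratSpan s) ≤ max ℵ₀ #s :=
  calc #(ratSpan s) ≤ #(List (ℚ × s)) := mk_range_le
    _ ≤ max ℵ₀ #(ℚ × s) := mk_list_le_max _
    _ ≤ max ℵ₀ #s := by
      refine max_le (le_max_left _ _) ?_
      rw [mk_prod, Cardinal.mkRat, lift_aleph0, lift_uzero]
      exact mul_le_max_of_aleph0_le_left le_rfl

theorem add_mem_closure_ratSpan {s : Set X} {x y : X} (hx : x ∈ closure (ratSpan s))
    (hy : y ∈ closure (ratSpan s)) : x + y ∈ closure (ratSpan s) :=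
  map_mem_closure₂ continuous_add hx hy fun _ ⟨l₁, h₁⟩ _ ⟨l₂, h₂⟩ =>
    ⟨l₁ ++ l₂, by simp [← h₁, ← h₂]⟩

theorem ratCast_smul_mem_ratSpan {s : Set X} (q : ℚ) {x : X} (hx : x ∈ ratSpan s) :
    (q : ℝ) • x ∈ ratSpan s := by
  obtain ⟨l, rfl⟩ := hx
  refine ⟨l.map fun p => (q * p.1, p.2), ?_⟩
  simp [List.smul_sum, Function.comp_def, smul_smul]

theorem smul_mem_closure_ratSpan {s : Set X} (r : ℝ) {x : X} (hx : x ∈ closure (ratSpan s)) :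
    r • x ∈ closure (ratSpan s) :=
  Rat.denseRange_cast.induction_on r
    (isClosed_closure.preimage (continuous_id.smul continuous_const))
    fun q => map_mem_closure (continuous_const_smul _) hx fun _ => ratCast_smul_mem_ratSpan q

theorem span_subset_closure_ratSpan (s : Set X) :
    (Submodule.span ℝ s : Set X) ⊆ closure (ratSpan s) := fun x hx => by
  induction hx using Submodule.span_induction with
  | mem x hx => exact subset_closure ⟨[(1, ⟨x, hx⟩)], by simp⟩
  | zero => exact subset_closure ⟨[], by simp⟩
  | add x y _ _ hx hy => exact add_mem_closure_ratSpan hx hy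
  | smul r x _ hx => exact smul_mem_closure_ratSpan r hx

theorem densH_le_of_dense_span {s : Set X} (hs : Dense (Submodule.span ℝ s : Set X)) :
    densH X ≤ max ℵ₀ #s :=
  (densH_le_mk (hs.mono (span_subset_closure_ratSpan s)).of_closure).trans (mk_ratSpan_le s)

theorem inHyperplaneIdeal_closure_span {s : Set X} (hs : max ℵ₀ #s < densH X) :
    InHyperplaneIdeal (closure (Submodule.span ℝ s : Set X)) := by
  rw [← Submodule.topologicalClosure_coe]
  refine .of_isClosed_ne_top _ (Submodule.isClosed_topologicalClosure _) fun htop => ?_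
  rw [← Submodule.dense_iff_topologicalClosure_eq_top] at htop
  exact (densH_le_of_dense_span htop).not_gt hs

theorem covH_le_cof_of_monotone {α : Type u} [Preorder α] {Y : α → Set X} (hY : Monotone Y)
    (hI : ∀ a, InHyperplaneIdeal (Y a)) (hU : ⋃ a, Y a = Set.univ) : covH X ≤ Order.cof α := by
  obtain ⟨S, hS, hScard⟩ := Order.exists_cof_eq α
  refine (covH_le_mk (F := Y '' S) (by rintro _ ⟨a, -, rfl⟩; exact hI a) ?_).trans
    (mk_image_le.trans hScard.le)
  refine eq_univ_of_forall fun x => ?_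
  obtain ⟨a, ha⟩ := mem_iUnion.1 (hU ▸ mem_univ x)
  obtain ⟨b, hb, hab⟩ := hS a
  exact ⟨Y b, mem_image_of_mem Y hb, hY hab ha⟩

theorem covH_le_cof_densH (hcof : ℵ₀ < (densH X).ord.cof) : covH X ≤ (densH X).ord.cof := by
  have hdens : ℵ₀ < densH X := hcof.trans_le (Ordinal.cof_ord_le _)
  obtain ⟨d, hd⟩ := exists_denseRange_ord_toType (X := X)
  let V : (densH X).ord.ToType → Set X := fun a => Submodule.span ℝ (d '' Iic a)
  have hV : Monotone V := fun a b hab =>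
    Submodule.span_mono (image_mono (Iic_subset_Iic.2 hab))
  rw [← Ordinal.cof_toType] at hcof ⊢
  refine covH_le_cof_of_monotone (fun a b hab => closure_mono (hV hab)) (fun a => ?_) ?_
  · refine inHyperplaneIdeal_closure_span (max_lt hdens (mk_image_le.trans_lt ?_))
    exact mk_Iic_ord_toType_lt hdens.le a
  · rw [← closure_iUnion_eq_iUnion_closure_of_aleph0_lt_cof hV hcof, ← univ_subset_iff,
      ← hd.closure_eq]
    exact closure_mono (range_subset_iff.2 fun a =>
      mem_iUnion.2 ⟨a, Submodule.subset_span ⟨a, self_mem_Iic, rfl⟩⟩)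

end NormedSpace

/-- ℵ₁ ≤ cov(X) ≤ 𝔠; if cf(dens(X)) is uncountable then cov(X) ≤ cf(dens(X));
in particular dens(X) = ℵ₁ implies cov(X) = ℵ₁. -/
theorem stmt6 (X : Type u) [NormedAddCommGroup X] [NormedSpace ℝ X] [CompleteSpace X]
    (hdim : 1 < Module.rank ℝ X) :
    Cardinal.aleph 1 ≤ covH X ∧ covH X ≤ Cardinal.continuum ∧
      (Cardinal.aleph0 < (densH X).ord.cof → covH X ≤ (densH X).ord.cof) ∧
      (densH X = Cardinal.aleph 1 → covH X = Cardinal.aleph 1) := by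
  obtain ⟨F, hH, hU, hF⟩ := exists_hyperplane_cover_mk_le_continuum hdim
  have hideal : ∀ A ∈ F, InHyperplaneIdeal A := fun A hA => (hH A hA).inHyperplaneIdeal
  have haleph : ℵ₁ ≤ covH X := le_csInf ⟨#F, F, hideal, hU, rfl⟩
    fun _ ⟨G, hG, hGU, hc⟩ => hc ▸ aleph_one_le_mk_of_sUnion_eq_univ hG hGU
  refine ⟨haleph, (covH_le_mk hideal hU).trans hF, covH_le_cof_densH,
    fun hd => le_antisymm ?_ haleph⟩
  have hcof : (densH X).ord.cof = ℵ₁ := hd ▸ isRegular_aleph_one.cof_ord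
  exact hcof ▸ covH_le_cof_densH (hcof ▸ aleph0_lt_aleph_one)

end
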